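/- Let N ≥ 1 and let b : ℝ → ℂ^N be a continuously differentiable solution of the toy model system: for each j = 1,…,N, db_j/dt = i(−|b_j|² b_j + 2 \bar{b_j}(b_{j−1}² + b_{j+1}²)), with the Dirichlet boundary convention b_0(t) = b_{N+1}(t) = 0. Then the Hamiltonian H[b(t)] = Σ_{j=1}^N ( (1/4)|b_j(t)|⁴ − Re( \bar{b_j(t)}² b_{j−1}(t)² ) ) is constant in time: H[b(t)] = H[b(0)] for all t. -/

import Mathlib

/-!
The system is Hamiltonian: with `g_j` the bracket on the right-hand side (`force` below), the
Wirtinger derivative of `H` is `∂H/∂b̄_j = -g_j / 2`. Hence along any differentiable path with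
`b_0 = b_{N+1} = 0` the chain rule gives `dH/dt = -∑ Re(ḃ_j ḡ_j)`, and along a solution
`ḃ_j = i g_j`, so every term is `Re(i |g_j|²) = 0`.
-/

open Complex Finset ComplexConjugate

namespace ToyModel

noncomputable def force (b : ℕ → ℂ) (j : ℕ) : ℂ :=
  -(normSq (b j) : ℂ) * b j + 2 * conj (b j) * (b (j - 1) ^ 2 + b (j + 1) ^ 2)

noncomputable def bond (u v : ℂ) : ℝ := (1 / 4) * normSq u ^ 2 - (conj u ^ 2 * v ^ 2).re

noncomputable def hamiltonian (N : ℕ) (b : ℕ → ℂ) : ℝ :=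
  ∑ j ∈ Icc 1 N, bond (b j) (b (j - 1))

theorem hasDerivAt_bond {u v : ℝ → ℂ} {u' v' : ℂ} {t : ℝ}
    (hu : HasDerivAt u u' t) (hv : HasDerivAt v v' t) :
    HasDerivAt (fun s => bond (u s) (v s))
      ((u' * (normSq (u t) * conj (u t) - 2 * u t * conj (v t) ^ 2)).re
        - 2 * (v' * conj (u t) ^ 2 * v t).re) t := by
  have hu_conj : HasDerivAt (fun s => conj (u s)) (conj u') t := hu.star
  have hF := (((hu.fun_mul hu_conj).fun_pow 2).const_mul (1 / 4 : ℂ)).fun_sub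
    ((hu_conj.fun_pow 2).fun_mul (hv.fun_pow 2))
  refine ((reCLM.hasFDerivAt.comp_hasDerivAt t hF).congr_deriv ?_).congr_of_eventuallyEq
    (Filter.Eventually.of_forall fun s => ?_)
  · simp only [one_div, Nat.cast_ofNat, Nat.add_one_sub_one, pow_one, pow_two, reCLM_apply, sub_re,
      mul_re, inv_re, re_ofNat, normSq_ofNat, div_self_mul_self', conj_re, conj_im, mul_neg,
      sub_neg_eq_add, im_ofNat, mul_im, zero_mul, sub_zero, add_re, add_zero, add_im, inv_im,
      neg_zero, zero_div, neg_mul, neg_neg, normSq_apply, ofReal_add, ofReal_mul, ofReal_re,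
      ofReal_im, mul_zero, sub_im]
    ring
  · simp [bond, mul_conj, ← ofReal_pow]

theorem sum_Icc_comp_sub_one_add {M : Type*} [AddCommMonoid M] (f : ℕ → M) (N : ℕ) :
    ∑ j ∈ Icc 1 N, f (j - 1) + f N = f 0 + ∑ j ∈ Icc 1 N, f j := by
  induction N with
  | zero => simp
  | succ n ih =>
    rw [sum_Icc_succ_top (by omega), sum_Icc_succ_top (by omega), Nat.add_sub_cancel, ih,
      add_assoc]

theorem conj_force (b : ℕ → ℂ) (j : ℕ) :
    conj (force b j) = -(normSq (b j) * conj (b j) - 2 * b j * conj (b (j - 1)) ^ 2)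
      + 2 * conj (b (j + 1)) ^ 2 * b j := by
  simp only [force, map_add, map_mul, map_neg, map_pow, map_ofNat, conj_ofReal, conj_conj]
  ring

theorem hasDerivAt_hamiltonian {N : ℕ} {b : ℝ → ℕ → ℂ} {d : ℕ → ℂ} {t : ℝ}
    (hd : ∀ j ≤ N, HasDerivAt (fun s => b s j) (d j) t)
    (h0 : b t 0 = 0) (hN : b t (N + 1) = 0) :
    HasDerivAt (fun s => hamiltonian N (b s))
      (-∑ j ∈ Icc 1 N, (d j * conj (force (b t) j)).re) t := by
  -- The coupling term of the `j`-th bond contributes to the `(j - 1)`-th coordinate; shifting it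
  -- back costs boundary terms that vanish because `b_0 = b_{N+1} = 0`.
  set f : ℕ → ℝ := fun k => 2 * (d k * conj (b t (k + 1)) ^ 2 * b t k).re
  have hsum : HasDerivAt (fun s => hamiltonian N (b s)) (∑ j ∈ Icc 1 N,
      ((d j * (normSq (b t j) * conj (b t j) - 2 * b t j * conj (b t (j - 1)) ^ 2)).re
        - f (j - 1))) t := by
    refine HasDerivAt.fun_sum fun j hj => ?_
    obtain ⟨hj1, hjN⟩ := mem_Icc.mp hj
    simpa [f, Nat.sub_add_cancel hj1] using hasDerivAt_bond (hd j hjN) (hd (j - 1) (by omega))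
  have hf : ∑ j ∈ Icc 1 N, f (j - 1) = ∑ j ∈ Icc 1 N, f j := by
    simpa [f, h0, hN] using sum_Icc_comp_sub_one_add f N
  convert hsum using 1
  rw [sum_sub_distrib, hf, ← sum_sub_distrib, ← sum_neg_distrib]
  refine sum_congr rfl fun j _ => ?_
  simp only [conj_force, neg_sub, mul_add, add_re, mul_re, sub_re, re_ofNat, im_ofNat, zero_mul,
    sub_zero, mul_im, add_zero, ofReal_re, conj_re, ofReal_im, conj_im, mul_neg, neg_zero, sub_im,
    sub_neg_eq_add, neg_add_rev, f]
  ring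

theorem re_I_mul_mul_conj (z : ℂ) : (I * z * conj z).re = 0 := by
  rw [mul_assoc, mul_conj]
  simp

end ToyModel

open ToyModel in
theorem toy_model_energy_conservation
    (N : ℕ) (b : ℝ → ℕ → ℂ)
    (hbc0 : ∀ t : ℝ, b t 0 = 0) (hbcN : ∀ t : ℝ, b t (N + 1) = 0)
    (hode : ∀ j ∈ Finset.Icc 1 N, ∀ t : ℝ,
      HasDerivAt (fun s : ℝ => b s j)
        (Complex.I * (-((Complex.normSq (b t j) : ℂ)) * b t j
          + 2 * (starRingEnd ℂ) (b t j) * ((b t (j - 1)) ^ 2 + (b t (j + 1)) ^ 2))) t) :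
    ∀ t : ℝ,
      (∑ j ∈ Finset.Icc 1 N, ((1 / 4 : ℝ) * (Complex.normSq (b t j)) ^ 2
        - (((starRingEnd ℂ) (b t j)) ^ 2 * (b t (j - 1)) ^ 2).re))
      = ∑ j ∈ Finset.Icc 1 N, ((1 / 4 : ℝ) * (Complex.normSq (b 0 j)) ^ 2
        - (((starRingEnd ℂ) (b 0 j)) ^ 2 * (b 0 (j - 1)) ^ 2).re) := by
  have hsol : ∀ t, ∀ j ≤ N, HasDerivAt (fun s => b s j) (I * force (b t) j) t := by
    intro t j hj
    rcases j.eq_zero_or_pos with rfl | hj0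
    · simpa [funext hbc0, force, hbc0 t] using hasDerivAt_const t (0 : ℂ)
    · exact hode j (mem_Icc.mpr ⟨hj0, hj⟩) t
  have hconst : ∀ t, HasDerivAt (fun s => hamiltonian N (b s)) 0 t := fun t => by
    simpa only [re_I_mul_mul_conj, sum_const_zero, neg_zero] using
      hasDerivAt_hamiltonian (hsol t) (hbc0 t) (hbcN t)
  exact fun t => is_const_of_deriv_eq_zero (fun s => (hconst s).differentiableAt)
    (fun s => (hconst s).deriv) t 0
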